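/- For 0 ≤ k ≤ ⌊n/2⌋, the incomplete q-Chebyshev polynomials of the second kind satisfy the non-homogeneous recurrence U_{n+2}^k = (1+q^{n+2}) x U_{n+1}^k + q^{n+1} s U_n^k − q^{n+1+k²} [n-k choose k]_q · ((-q;q)_{n-k}/(-q;q)_k) · s^{k+1} x^{n-2k}. -/

import Mathlib

/-- q-integer [n]_q = (1-q^n)/(1-q). -/
noncomputable def qint (q : ℂ) (n : ℕ) : ℂ := (1 - q ^ n) / (1 - q)

/-- q-factorial [n]_q!. -/
noncomputable def qfact (q : ℂ) (n : ℕ) : ℂ := ∏ i ∈ Finset.range n, qint q (i + 1)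

/-- Gaussian (q-binomial) coefficient, 0 for k > n. -/
noncomputable def qbinom (q : ℂ) (n k : ℕ) : ℂ :=
  if k ≤ n then qfact q n / (qfact q (n - k) * qfact q k) else 0

/-- q-shifted factorial (x;q)_n. -/
noncomputable def qpoch (x q : ℂ) (n : ℕ) : ℂ := ∏ i ∈ Finset.range n, (1 - q ^ i * x)

/-- Partial sum defining incomplete q-Chebyshev polynomials of the second kind:
`Usum x s q n (k+1)` is U_n^k(x,s,q), and `Usum x s q n 0 = 0` is the empty sum (k = -1). -/
noncomputable def Usum (x s q : ℂ) (n m : ℕ) : ℂ :=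
  ∑ j ∈ Finset.range m,
    q ^ (j ^ 2) * qbinom q (n - j) j * (qpoch (-q) q (n - j) / qpoch (-q) q j) *
      s ^ j * x ^ (n - 2 * j)

/-- Partial sum defining incomplete q-Chebyshev polynomials of the first kind:
`Tsum x s q n (k+1)` is T_n^k(x,s,q). -/
noncomputable def Tsum (x s q : ℂ) (n m : ℕ) : ℂ :=
  ∑ j ∈ Finset.range m,
    q ^ (j ^ 2) * (qint q n / qint q (n - j)) * qbinom q (n - j) j *
      (qpoch (-q) q (n - j - 1) / qpoch (-q) q j) * s ^ j * x ^ (n - 2 * j)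


/-! Write `U_n^k = ∑_{j ≤ k} u(n, j)`. Besides `u(n+2, 0) = (1 + q^{n+2}) x u(n+1, 0)`, the summands
satisfy `u(n+2, j+1) = (1 + q^{n+2}) x u(n+1, j+1) + q^{n+1} s u(n, j)`; after cancelling common
factors this is `(1 + q^{m+1}) [m+1, j+1] = (1 + q^{m+j+2}) [m, j+1] + q^{m-j} (1 + q^{j+1}) [m, j]`,
the sum of the two q-Pascal rules (valid as `q` is not a root of unity, so no q-factorial vanishes).
Summing over `j`, the `s`-part only collects `u(n, j)` for `j < k`; the missing summand
`q^{n+1} s u(n, k)` is the inhomogeneous term. -/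

theorem qint_add (q : ℂ) (a b : ℕ) : qint q (a + b) = qint q a + q ^ a * qint q b := by
  simp only [qint]
  ring

theorem qfact_zero (q : ℂ) : qfact q 0 = 1 :=
  Finset.prod_range_zero _

theorem qfact_succ (q : ℂ) (n : ℕ) : qfact q (n + 1) = qfact q n * qint q (n + 1) :=
  Finset.prod_range_succ _ _

theorem qpoch_zero (x q : ℂ) : qpoch x q 0 = 1 :=
  Finset.prod_range_zero _

theorem qpoch_neg_succ (q : ℂ) (n : ℕ) :
    qpoch (-q) q (n + 1) = qpoch (-q) q n * (1 + q ^ (n + 1)) := by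
  rw [qpoch, Finset.prod_range_succ, ← qpoch]
  ring

theorem qbinom_of_le (q : ℂ) {n k : ℕ} (h : k ≤ n) :
    qbinom q n k = qfact q n / (qfact q (n - k) * qfact q k) :=
  if_pos h

noncomputable def Uterm (x s q : ℂ) (n j : ℕ) : ℂ :=
  q ^ (j ^ 2) * qbinom q (n - j) j * (qpoch (-q) q (n - j) / qpoch (-q) q j) * s ^ j *
    x ^ (n - 2 * j)

theorem Usum_eq_sum_Uterm (x s q : ℂ) (n m : ℕ) :
    Usum x s q n m = ∑ j ∈ Finset.range m, Uterm x s q n j :=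
  rfl

section NotRootOfUnity

variable {q : ℂ} (hq : ∀ n, n ≠ 0 → q ^ n ≠ 1)
include hq

theorem one_add_pow_ne_zero {n : ℕ} (hn : n ≠ 0) : 1 + q ^ n ≠ 0 := by
  intro h
  refine hq (2 * n) (by omega) ?_
  rw [pow_mul', eq_neg_of_add_eq_zero_right h]
  norm_num

theorem qint_ne_zero {n : ℕ} (hn : n ≠ 0) : qint q n ≠ 0 := by
  refine div_ne_zero (sub_ne_zero.2 (hq n hn).symm) (sub_ne_zero.2 ?_)
  simpa using (hq 1 one_ne_zero).symm

theorem qfact_ne_zero (n : ℕ) : qfact q n ≠ 0 :=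
  Finset.prod_ne_zero_iff.2 fun i _ => qint_ne_zero hq i.succ_ne_zero

theorem qpoch_neg_ne_zero (n : ℕ) : qpoch (-q) q n ≠ 0 := by
  induction n with
  | zero => rw [qpoch_zero]; exact one_ne_zero
  | succ n ih => rw [qpoch_neg_succ]; exact mul_ne_zero ih (one_add_pow_ne_zero hq n.succ_ne_zero)

theorem qbinom_zero_right (n : ℕ) : qbinom q n 0 = 1 := by
  rw [qbinom_of_le q n.zero_le, Nat.sub_zero, qfact_zero, mul_one, div_self (qfact_ne_zero hq n)]

theorem qbinom_succ_succ_of_qint_eq {m k : ℕ} (h : k < m) {c₁ c₂ : ℂ}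
    (hc : qint q (m + 1) = c₁ * qint q (k + 1) + c₂ * qint q (m - k)) :
    qbinom q (m + 1) (k + 1) = c₁ * qbinom q m k + c₂ * qbinom q m (k + 1) := by
  obtain ⟨d, rfl⟩ := Nat.exists_eq_add_of_lt h
  rw [qbinom_of_le q (by omega), qbinom_of_le q (by omega), qbinom_of_le q (by omega),
    show k + d + 1 + 1 - (k + 1) = d + 1 by omega, show k + d + 1 - k = d + 1 by omega,
    show k + d + 1 - (k + 1) = d by omega, qfact_succ q (k + d + 1), qfact_succ q d,
    qfact_succ q k, hc, show k + d + 1 - k = d + 1 by omega]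
  have := qfact_ne_zero hq
  have := qint_ne_zero hq d.succ_ne_zero
  have := qint_ne_zero hq k.succ_ne_zero
  field_simp

theorem qbinom_succ_succ {m k : ℕ} (h : k < m) :
    qbinom q (m + 1) (k + 1) = qbinom q m k + q ^ (k + 1) * qbinom q m (k + 1) := by
  simpa using qbinom_succ_succ_of_qint_eq hq h (c₁ := 1) (c₂ := q ^ (k + 1))
    (by rw [one_mul, ← qint_add]; congr 1; omega)

theorem qbinom_succ_succ' {m k : ℕ} (h : k < m) :
    qbinom q (m + 1) (k + 1) = q ^ (m - k) * qbinom q m k + qbinom q m (k + 1) := by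
  simpa using qbinom_succ_succ_of_qint_eq hq h (c₁ := q ^ (m - k)) (c₂ := 1)
    (by rw [one_mul, add_comm (_ * _), ← qint_add]; congr 1; omega)

theorem one_add_pow_mul_qbinom_succ_succ {m k : ℕ} (h : k < m) :
    (1 + q ^ (m + 1)) * qbinom q (m + 1) (k + 1) =
      (1 + q ^ (m + k + 2)) * qbinom q m (k + 1) +
        q ^ (m - k) * (1 + q ^ (k + 1)) * qbinom q m k := by
  obtain ⟨d, rfl⟩ := Nat.exists_eq_add_of_lt h
  rw [add_mul, one_mul]
  nth_rw 1 [qbinom_succ_succ' hq h]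
  rw [qbinom_succ_succ hq h, show k + d + 1 - k = d + 1 by omega]
  ring

variable (x s : ℂ)

theorem Uterm_add_two_zero (n : ℕ) :
    Uterm x s q (n + 2) 0 = (1 + q ^ (n + 2)) * x * Uterm x s q (n + 1) 0 := by
  simp only [Uterm, Nat.sub_zero, mul_zero, qbinom_zero_right hq, qpoch_neg_succ q (n + 1)]
  ring

theorem Uterm_add_two_succ {n j : ℕ} (hj : 2 * j + 1 ≤ n) :
    Uterm x s q (n + 2) (j + 1) =
      (1 + q ^ (n + 2)) * x * Uterm x s q (n + 1) (j + 1) + q ^ (n + 1) * s * Uterm x s q n j := by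
  obtain ⟨d, rfl⟩ := Nat.exists_eq_add_of_le hj
  have key := one_add_pow_mul_qbinom_succ_succ hq (show j < j + 1 + d by omega)
  rw [show j + 1 + d + j + 2 = 2 * j + 1 + d + 2 by omega, show j + 1 + d - j = d + 1 by omega]
    at key
  simp only [Uterm]
  rw [show 2 * j + 1 + d + 2 - (j + 1) = j + 1 + d + 1 by omega,
    show 2 * j + 1 + d + 1 - (j + 1) = j + 1 + d by omega,
    show 2 * j + 1 + d - j = j + 1 + d by omega,
    show 2 * j + 1 + d + 2 - 2 * (j + 1) = d + 1 by omega,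
    show 2 * j + 1 + d + 1 - 2 * (j + 1) = d by omega,
    show 2 * j + 1 + d - 2 * j = d + 1 by omega, qpoch_neg_succ q (j + 1 + d), qpoch_neg_succ q j]
  have := qpoch_neg_ne_zero hq j
  have := one_add_pow_ne_zero hq j.succ_ne_zero
  field_simp
  linear_combination (q ^ (j ^ 2) * q ^ (2 * j + 1) * s ^ (j + 1) * x ^ (d + 1) *
    qpoch (-q) q (j + 1 + d)) * key

theorem Usum_add_two_succ {n k : ℕ} (hk : 2 * k ≤ n + 1) :
    Usum x s q (n + 2) (k + 1) =
      (1 + q ^ (n + 2)) * x * Usum x s q (n + 1) (k + 1) + q ^ (n + 1) * s * Usum x s q n k := by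
  have hterm : ∀ j ∈ Finset.range k, Uterm x s q (n + 2) (j + 1) =
      (1 + q ^ (n + 2)) * x * Uterm x s q (n + 1) (j + 1) + q ^ (n + 1) * s * Uterm x s q n j :=
    fun j hj => Uterm_add_two_succ hq x s (by rw [Finset.mem_range] at hj; omega)
  simp only [Usum_eq_sum_Uterm]
  rw [Finset.sum_range_succ', Finset.sum_range_succ' _ k, Finset.sum_congr rfl hterm,
    Finset.sum_add_distrib, ← Finset.mul_sum, ← Finset.mul_sum, Uterm_add_two_zero hq]
  ring

end NotRootOfUnity

theorem Uinc_nonhom_rec_general (q : ℂ) (hq1 : ‖q‖ < 1)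
    (x s : ℂ) (n k : ℕ) (hk : 2 * k ≤ n) :
    Usum x s q (n + 2) (k + 1) =
      (1 + q ^ (n + 2)) * x * Usum x s q (n + 1) (k + 1) +
        q ^ (n + 1) * s * Usum x s q n (k + 1) -
        q ^ (n + 1 + k ^ 2) * qbinom q (n - k) k *
          (qpoch (-q) q (n - k) / qpoch (-q) q k) * s ^ (k + 1) * x ^ (n - 2 * k) := by
  have hq : ∀ m, m ≠ 0 → q ^ m ≠ 1 := fun m hm h =>
    (Complex.norm_eq_one_of_pow_eq_one h hm ▸ hq1).false
  rw [Usum_add_two_succ hq x s (by omega), Usum_eq_sum_Uterm x s q n (k + 1),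
    Finset.sum_range_succ, ← Usum_eq_sum_Uterm, Uterm]
  ring

theorem Uinc_nonhom_rec (q : ℂ) (hq0 : 0 < ‖q‖) (hq1 : ‖q‖ < 1)
    (x s : ℂ) (n k : ℕ) (hk : 2 * k ≤ n) :
    Usum x s q (n + 2) (k + 1) =
      (1 + q ^ (n + 2)) * x * Usum x s q (n + 1) (k + 1) +
        q ^ (n + 1) * s * Usum x s q n (k + 1) -
        q ^ (n + 1 + k ^ 2) * qbinom q (n - k) k *
          (qpoch (-q) q (n - k) / qpoch (-q) q k) * s ^ (k + 1) * x ^ (n - 2 * k) :=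
  Uinc_nonhom_rec_general q hq1 x s n k hk
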